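/- arXiv:2211.08425 — 3 statements merged into one kernel-verified Lean document; each statement's English description precedes it below -/
import Mathlib

section
/- (C4: recursive Taylor accumulates higher-order derivatives for analytic activations.) Let f = f_n ∘ ⋯ ∘ f_1 be a network whose layers f_l : ℝ^{d_l} → ℝ^{d_{l+1}} are twice continuously differentiable (e.g., linear layers with the analytic Softplus activation), let R^l be the DTD relevance functions, and let the root-point functions ã_l^{(j)} be differentiable at a_l. Then by the product rule the Jacobian of R^l decomposes entrywise as ∂R^l_k/∂a_{l,m}(a_l) = ∑_{j=1}^{d_{l+1}} [ (δ_{km} − ∂ã^{(j)}_{l,k}/∂a_{l,m}(a_l)) · (∂(R^{l+1}_j ∘ f_l)/∂a_{l,k})(ã^{(j)}_l(a_l)) + (a_{l,k} − ã^{(j)}_{l,k}(a_l)) · ∂/∂a_{l,m}[ (∂(R^{l+1}_j ∘ f_l)/∂a_{l,k})(ã^{(j)}_l(a_l)) ] ]; the second summand involves the second derivatives of R^{l+1}_j ∘ f_l composed with the root-function Jacobian, so each recursive application of the Taylor theorem produces a derivative of R^{l+1} ∘ f_l of one order higher. -/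
noncomputable section

section TaylorTerm

variable {𝕜 : Type*} [NontriviallyNormedField 𝕜] {ι : Type*} [Fintype ι] [DecidableEq ι]

theorem ContDiffAt.differentiableAt_fderiv_comp_apply {E F G : Type*}
    [NormedAddCommGroup E] [NormedSpace 𝕜 E] [NormedAddCommGroup F] [NormedSpace 𝕜 F]
    [NormedAddCommGroup G] [NormedSpace 𝕜 G] {g : E → F} {ρ : G → E} {a : G}
    (hg : ContDiffAt 𝕜 2 g (ρ a)) (hρ : DifferentiableAt 𝕜 ρ a) (v : E) :
    DifferentiableAt 𝕜 (fun b => fderiv 𝕜 g (ρ b) v) a :=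
  (((hg.fderiv_right (m := 1) le_rfl).differentiableAt one_ne_zero).comp a hρ).clm_apply
    (differentiableAt_const v)

theorem fderiv_apply_sub_apply_single {ρ : (ι → 𝕜) → ι → 𝕜} {a : ι → 𝕜}
    (hρ : DifferentiableAt 𝕜 ρ a) (k i : ι) :
    fderiv 𝕜 (fun b => b k - ρ b k) a (Pi.single i 1)
      = (if k = i then 1 else 0) - fderiv 𝕜 (fun b => ρ b k) a (Pi.single i 1) := by
  rw [fderiv_fun_sub (differentiableAt_apply k a) (differentiableAt_pi.1 hρ k),
    sub_apply, (hasFDerivAt_apply k a).fderiv,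
    ContinuousLinearMap.proj_apply, Pi.single_apply]

/- The "Taylor term" is the `k`-th coordinate `∂_k g(ρ b) · (b_k - ρ(b)_k)` of a first-order
Taylor relevance with root-point function `ρ`; `R^l_k` is a sum of such terms. -/
variable {g : (ι → 𝕜) → 𝕜} {ρ : (ι → 𝕜) → ι → 𝕜} {a : ι → 𝕜}

theorem differentiableAt_taylorTerm (hg : ContDiffAt 𝕜 2 g (ρ a))
    (hρ : DifferentiableAt 𝕜 ρ a) (k : ι) :
    DifferentiableAt 𝕜 (fun b => fderiv 𝕜 g (ρ b) (Pi.single k 1) * (b k - ρ b k)) a :=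
  (hg.differentiableAt_fderiv_comp_apply hρ _).mul
    ((differentiableAt_apply k a).fun_sub (differentiableAt_pi.1 hρ k))

theorem fderiv_taylorTerm_apply_single (hg : ContDiffAt 𝕜 2 g (ρ a))
    (hρ : DifferentiableAt 𝕜 ρ a) (k i : ι) :
    fderiv 𝕜 (fun b => fderiv 𝕜 g (ρ b) (Pi.single k 1) * (b k - ρ b k)) a (Pi.single i 1)
      = ((if k = i then 1 else 0) - fderiv 𝕜 (fun b => ρ b k) a (Pi.single i 1))
          * fderiv 𝕜 g (ρ a) (Pi.single k 1)
        + (a k - ρ a k)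
          * fderiv 𝕜 (fun b => fderiv 𝕜 g (ρ b) (Pi.single k 1)) a (Pi.single i 1) := by
  rw [fderiv_fun_mul (hg.differentiableAt_fderiv_comp_apply hρ _)
      ((differentiableAt_apply k a).fun_sub (differentiableAt_pi.1 hρ k)),
    add_apply, smul_apply, smul_apply, smul_eq_mul, smul_eq_mul,
    fderiv_apply_sub_apply_single hρ k i]
  ring

end TaylorTerm

/-- C4: for a network with C² (e.g. Softplus) layers and DTD relevance
functions with root-point functions differentiable at `a`, the product rule decomposes the
Jacobian of `R^l` entrywise as
`∂R^l_k/∂a_i = ∑_j [ (δ_{ki} − ∂ρ^{(j)}_k/∂a_i) · (∂(R^{l+1}_j ∘ f_l)/∂a_k)(ρ^{(j)}(a))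
  + (a_k − ρ^{(j)}_k(a)) · ∂/∂a_i[(∂(R^{l+1}_j ∘ f_l)/∂a_k)(ρ^{(j)}(a))] ]`,
where the second summand involves a derivative of `R^{l+1}_j ∘ f_l` of one order higher; the
second conjunct is the formula for the top layer, where `R^{n+1}` is the projection onto the
explained logit. -/
theorem dtd_smooth_layers_higher_order_terms
    (m : ℕ) (d : ℕ → ℕ)
    (f : ∀ l, (Fin (d l) → ℝ) → Fin (d (l+1)) → ℝ)
    (hsmooth : ∀ l, ContDiff ℝ 2 (f l))
    (ξ : Fin (d (m+1)))
    (R : ∀ l, (Fin (d l) → ℝ) → Fin (d l) → ℝ)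
    (ρ : ∀ l, Fin (d (l+1)) → (Fin (d l) → ℝ) → Fin (d l) → ℝ)
    (hRrec : ∀ l, l < m → ∀ (a : Fin (d l) → ℝ) (k : Fin (d l)),
      R l a k = ∑ j, fderiv ℝ (fun b => R (l+1) (f l b) j) (ρ l j a) (Pi.single k 1)
        * (a k - ρ l j a k))
    (hRtop : ∀ (a : Fin (d m) → ℝ) (k : Fin (d m)),
      R m a k = fderiv ℝ (fun b => f m b ξ) (ρ m ξ a) (Pi.single k 1) * (a k - ρ m ξ a k)) :
    (∀ l, l < m → ∀ a : Fin (d l) → ℝ,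
      (∀ j : Fin (d (l+1)), DifferentiableAt ℝ (ρ l j) a) →
      (∀ j : Fin (d (l+1)), ContDiffAt ℝ 2 (fun b => R (l+1) (f l b) j) (ρ l j a)) →
      ∀ k i : Fin (d l),
        fderiv ℝ (fun b => R l b k) a (Pi.single i 1) =
          ∑ j,
            (((if k = i then (1:ℝ) else 0)
                - fderiv ℝ (fun b => ρ l j b k) a (Pi.single i 1))
              * fderiv ℝ (fun b => R (l+1) (f l b) j) (ρ l j a) (Pi.single k 1)
            + (a k - ρ l j a k)
              * fderiv ℝ
                  (fun b => fderiv ℝ (fun c => R (l+1) (f l c) j) (ρ l j b) (Pi.single k 1))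
                  a (Pi.single i 1)))
    ∧ (∀ a : Fin (d m) → ℝ,
      DifferentiableAt ℝ (ρ m ξ) a →
      ∀ k i : Fin (d m),
        fderiv ℝ (fun b => R m b k) a (Pi.single i 1) =
          ((if k = i then (1:ℝ) else 0)
              - fderiv ℝ (fun b => ρ m ξ b k) a (Pi.single i 1))
            * fderiv ℝ (fun b => f m b ξ) (ρ m ξ a) (Pi.single k 1)
          + (a k - ρ m ξ a k)
            * fderiv ℝ
                (fun b => fderiv ℝ (fun c => f m c ξ) (ρ m ξ b) (Pi.single k 1))
                a (Pi.single i 1)) := by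
  refine ⟨fun l hl a hρ hR k i => ?_, fun a hρ k i => ?_⟩
  · rw [show (fun b => R l b k) = _ from funext fun b => hRrec l hl b k,
      fderiv_fun_sum fun j _ => differentiableAt_taylorTerm (hR j) (hρ j) k,
      sum_apply]
    exact Finset.sum_congr rfl fun j _ => fderiv_taylorTerm_apply_single (hR j) (hρ j) k i
  · have hf : ContDiffAt ℝ 2 (fun b => f m b ξ) (ρ m ξ a) :=
      (contDiff_pi.1 (hsmooth m) ξ).contDiffAt
    rw [show (fun b => R m b k) = _ from funext fun b => hRtop b k]
    exact fderiv_taylorTerm_apply_single hf hρ k i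
end
end

section
/- Let W be a real m × d matrix and define the one-layer ReLU network f : ℝ^d → ℝ with all biases equal to −1 (hence non-positive) by f(x) = ∑_{j=1}^m [(Wx)_j − 1]^+, where [·]^+ = max(·, 0). Then f vanishes identically on a neighborhood of the origin, f is differentiable at 0 with ∇f(0) = 0, and consequently for every input x at which f is differentiable with ∇f(x) ≠ 0, the origin does not lie in the linear region of f at x, i.e., 0 ∉ N_f(x); so the origin is not an admissible root point for such x, refuting the claim that non-positive biases guarantee that the origin is a valid root point. -/
noncomputable section

/-- A piecewise-C¹ path on `[0,1]`: continuous on `[0,1]` and C¹ off a finite set. -/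
def PiecewiseC1 {p : ℕ} (γ : ℝ → (Fin p → ℝ)) : Prop :=
  ContinuousOn γ (Set.Icc 0 1) ∧
    ∃ s : Finset ℝ, ∀ t ∈ Set.Icc (0:ℝ) 1, t ∉ s → ContDiffAt ℝ 1 γ t

/-- The linear region `N_g(x)` of `g` at `x`: all points `x'` such that `g` is differentiable
at `x` and at `x'` with `∇g(x') = ∇g(x)`, and `x'` can be joined to `x` by a piecewise-C¹ path
on which `g` is differentiable with gradient constantly equal to `∇g(x)`. -/
def LinearRegion {p : ℕ} (g : (Fin p → ℝ) → ℝ) (x : Fin p → ℝ) : Set (Fin p → ℝ) :=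
  {x' | DifferentiableAt ℝ g x ∧ DifferentiableAt ℝ g x' ∧
        fderiv ℝ g x' = fderiv ℝ g x ∧
        ∃ γ : ℝ → (Fin p → ℝ), PiecewiseC1 γ ∧ γ 0 = x ∧ γ 1 = x' ∧
          ∀ t ∈ Set.Icc (0:ℝ) 1, DifferentiableAt ℝ g (γ t) ∧ fderiv ℝ g (γ t) = fderiv ℝ g x}

theorem eventually_sum_max_zero_eq_zero {ι X : Type*} [TopologicalSpace X] [Fintype ι]
    {g : ι → X → ℝ} {a : X} (hg : ∀ j, ContinuousAt (g j) a) (ha : ∀ j, g j a < 0) :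
    ∀ᶠ y in nhds a, ∑ j, max 0 (g j y) = 0 := by
  have hneg : ∀ᶠ y in nhds a, ∀ j, g j y < 0 :=
    Filter.eventually_all.2 fun j => (hg j).eventually_lt continuousAt_const (ha j)
  filter_upwards [hneg] with y hy
  exact Finset.sum_eq_zero fun j _ => max_eq_left (hy j).le

theorem fderiv_eq_of_mem_linearRegion {p : ℕ} {g : (Fin p → ℝ) → ℝ} {x x' : Fin p → ℝ}
    (h : x' ∈ LinearRegion g x) : fderiv ℝ g x' = fderiv ℝ g x :=
  h.2.2.1

/-- the one-layer ReLU network `f x = ∑_j [(Wx)_j − 1]⁺` (all biases equal to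
`−1`, hence non-positive) vanishes identically on a neighborhood of the origin, is
differentiable at `0` with `∇f(0) = 0`, and consequently for every input `x` at which `f` is
differentiable with `∇f(x) ≠ 0`, the origin does not lie in the linear region `N_f(x)`; so
the origin is not an admissible root point for such `x`. -/
theorem relu_nonpositive_bias_origin_not_root
    {dd mm : ℕ} (W : Fin mm → Fin dd → ℝ)
    (f : (Fin dd → ℝ) → ℝ)
    (hf : ∀ x, f x = ∑ j, max 0 ((∑ i, W j i * x i) - 1)) :
    (∀ᶠ y in nhds (0 : Fin dd → ℝ), f y = 0) ∧
    DifferentiableAt ℝ f 0 ∧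
    fderiv ℝ f 0 = 0 ∧
    (∀ x : Fin dd → ℝ, DifferentiableAt ℝ f x → fderiv ℝ f x ≠ 0 →
      (0 : Fin dd → ℝ) ∉ LinearRegion f x) := by
  have hzero : ∀ᶠ y in nhds (0 : Fin dd → ℝ), f y = 0 := by
    simp only [hf]
    refine eventually_sum_max_zero_eq_zero (fun j => ?_) (fun j => by simp)
    exact ((continuous_finsetSum _ fun i _ => by fun_prop).sub continuous_const).continuousAt
  have hderiv : HasFDerivAt f (0 : (Fin dd → ℝ) →L[ℝ] ℝ) 0 :=
    hasFDerivAt_zero_of_eventually_const 0 hzero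
  refine ⟨hzero, hderiv.differentiableAt, hderiv.fderiv, ?_⟩
  intro x _ hne hmem
  exact hne (fderiv_eq_of_mem_linearRegion hmem ▸ hderiv.fderiv)
end
end

section
/- Let w, x ∈ ℝ^d with x ≥ 0 componentwise, let b ≤ 0, and assume wᵀx + b ≥ 0 and s := ∑_{i : w_i ≥ 0} w_i x_i > 0. Define the z⁺-rule root point x̃ = x − t·v with search direction v given componentwise by v_i = x_i if w_i ≥ 0 and v_i = 0 otherwise, and t = (wᵀx + b)/(wᵀv) = (wᵀx + b)/s. Then 0 ≤ t ≤ 1 and x̃ ≥ 0 componentwise; i.e., on the nonnegative input domain ℝ^d_{≥0} (e.g., outputs of a ReLU layer), the z⁺ rule always yields a nonnegative root point. -/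
/-- the `z⁺`-rule stays in the nonnegative domain: for `x ≥ 0`, `b ≤ 0`,
`wᵀx + b ≥ 0` and `s = ∑_{i : w_i ≥ 0} w_i x_i > 0`, the `z⁺`-rule root point
`xt = x − t·v` with `v_i = x_i` if `w_i ≥ 0` (else `0`) and `t = (wᵀx + b)/(wᵀv)` satisfies
`0 ≤ t ≤ 1` and `xt ≥ 0` componentwise. -/
theorem dtd_zplus_rule_nonneg_root
    {d : ℕ} (w x : Fin d → ℝ) (b : ℝ)
    (hx : ∀ i, 0 ≤ x i) (hb : b ≤ 0)
    (hout : 0 ≤ (∑ i, w i * x i) + b)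
    (hs : 0 < ∑ i, w i * (if 0 ≤ w i then x i else 0)) :
    let v : Fin d → ℝ := fun i => if 0 ≤ w i then x i else 0
    let t : ℝ := ((∑ i, w i * x i) + b) / (∑ i, w i * v i)
    0 ≤ t ∧ t ≤ 1 ∧ ∀ i, 0 ≤ x i - t * v i := by
  intro v t
  have hnum : (∑ i, w i * x i) + b ≤ ∑ i, w i * v i := by
    have hle : ∑ i, w i * x i ≤ ∑ i, w i * v i := by
      apply Finset.sum_le_sum
      intro i _
      simp only [v]
      by_cases h : 0 ≤ w i
      · simp [h]
      · simp [h]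
        exact mul_nonpos_of_nonpos_of_nonneg (le_of_not_ge h) (hx i)
    linarith
  have ht0 : 0 ≤ t := div_nonneg hout hs.le
  have ht1 : t ≤ 1 := by
    rw [div_le_one hs]
    exact hnum
  refine ⟨ht0, ht1, fun i => ?_⟩
  by_cases h : 0 ≤ w i
  · have : t * v i ≤ 1 * v i := by
      apply mul_le_mul_of_nonneg_right ht1
      simp [v, h, hx i]
    simp only [v, h, if_true] at this ⊢
    linarith
  · simp [v, h, hx i]
end
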